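/- In the formal power series ring R = ℝ[[x,y]] with maximal ideal m = (x,y), the ideal I = (x³, x²y, x² + y²) satisfies: (I :_R z) = (I :_R m) = m² for every z ∈ m ∖ m²; I is integrally closed; and I is not a power of m. In particular, an integrally closed m-primary ideal of a two-dimensional regular local ring can be contracted from R[m/z] for every z ∈ m ∖ m² without being a power of m. -/

import Mathlib

/-- `a` is integral over the ideal `I`: it satisfies an equation
`a^k + c₁ a^(k-1) + ⋯ + c_k = 0` with `cᵢ ∈ Iⁱ`. -/
def IsIntegralOverIdeal {A : Type*} [CommRing A] (I : Ideal A) (a : A) : Prop :=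
  ∃ (k : ℕ) (c : ℕ → A), 0 < k ∧ (∀ i ∈ Finset.Icc 1 k, c i ∈ I ^ i) ∧
    a ^ k + ∑ i ∈ Finset.Icc 1 k, c i * a ^ (k - i) = 0

/-!
Restrict to the isotropic line `y = i x`: the `ℝ`-algebra map `φ : ℝ[[x,y]] → ℂ[[t]]`,
`x ↦ t`, `y ↦ i t`, kills `x² + y²`. Modulo `m³` every series is a real quadratic polynomial,
and one that vanishes to order `3` at `(t, i t)` is a multiple of `x² + y²`; hence
`I = φ⁻¹ (t³)` and likewise `m² = φ⁻¹ (t²)`. Both are thus contracted from the DVR `ℂ[[t]]`,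
which makes `I` integrally closed, and since `φ z` has `t`-order exactly `1` for
`z ∈ m \ m²`, `u z ∈ I` forces `t² ∣ φ u`, i.e. `u ∈ m²`. Finally `x² ∈ m² \ I`, and
`x² + y² ∈ I \ m³` (seen on the line `y = 0`).
-/

open MvPowerSeries
open scoped Pointwise

theorem PowerSeries.X_pow_succ_dvd_C_mul_X_pow_iff {S : Type*} [Semiring S] {a : S} {n : ℕ} :
    X ^ (n + 1) ∣ C a * X ^ n ↔ a = 0 := by
  refine ⟨fun h => ?_, fun h => by simp [h]⟩
  simpa using X_pow_dvd_iff.mp h n n.lt_succ_self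

theorem PowerSeries.not_X_pow_succ_dvd_X_pow {S : Type*} [Semiring S] [Nontrivial S] (n : ℕ) :
    ¬ (X : PowerSeries S) ^ (n + 1) ∣ X ^ n := by
  simpa using (X_pow_succ_dvd_C_mul_X_pow_iff (a := (1 : S)) (n := n)).not.mpr one_ne_zero

theorem Prime.pow_dvd_of_pow_succ_dvd_mul {M : Type*} [CommMonoidWithZero M] [IsCancelMulZero M]
    {p a b : M} (hp : Prime p) {n : ℕ} (h : p ^ (n + 1) ∣ a * b) (hb : p ∣ b) (hb2 : ¬ p ^ 2 ∣ b) :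
    p ^ n ∣ a := by
  obtain ⟨b, rfl⟩ := hb
  refine hp.pow_dvd_of_dvd_mul_right n (fun h' => hb2 (sq p ▸ mul_dvd_mul_left p h')) ?_
  rwa [pow_succ, mul_left_comm, mul_comm (p ^ n), mul_dvd_mul_iff_left hp.ne_zero] at h

theorem IsIntegralOverIdeal.map {A B F : Type*} [CommRing A] [CommRing B] [FunLike F A B]
    [RingHomClass F A B] (φ : F) {I : Ideal A} {a : A} (h : IsIntegralOverIdeal I a) :
    IsIntegralOverIdeal (I.map φ) (φ a) := by
  obtain ⟨k, c, hk, hc, heq⟩ := h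
  refine ⟨k, fun i => φ (c i), hk,
    fun i hi => Ideal.map_pow φ I i ▸ Ideal.mem_map_of_mem φ (hc i hi), ?_⟩
  simpa using congrArg φ heq

theorem IsIntegralOverIdeal.mono {A : Type*} [CommRing A] {I J : Ideal A} (hIJ : I ≤ J) {a : A}
    (h : IsIntegralOverIdeal I a) : IsIntegralOverIdeal J a := by
  obtain ⟨k, c, hk, hc, heq⟩ := h
  exact ⟨k, c, hk, fun i hi => Ideal.pow_right_mono hIJ i (hc i hi), heq⟩

theorem Prime.pow_dvd_of_isIntegralOverIdeal {S : Type*} [CommRing S] [IsDomain S] {p a : S}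
    (hp : Prime p) (ha : FiniteMultiplicity p a) {n : ℕ}
    (h : IsIntegralOverIdeal (Ideal.span {p ^ n}) a) : p ^ n ∣ a := by
  obtain ⟨k, c, -, hc, heq⟩ := h
  obtain ⟨b, hab, hb⟩ := ha.exists_eq_pow_mul_and_not_dvd
  set r := multiplicity p a
  by_contra hna
  have hr : r < n := lt_of_not_ge fun hnr => hna ((pow_dvd_pow p hnr).trans ⟨b, hab⟩)
  -- every lower term of the equation is divisible by `p ^ (k * r + 1)`, but `a ^ k` is not
  have hterm : ∀ i ∈ Finset.Icc 1 k, p ^ (k * r + 1) ∣ c i * a ^ (k - i) := by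
    intro i hi
    obtain ⟨hi1, hik⟩ := Finset.mem_Icc.mp hi
    have hci : p ^ (n * i) ∣ c i := by
      simpa [Ideal.span_singleton_pow, Ideal.mem_span_singleton, ← pow_mul] using hc i hi
    have hai : p ^ (r * (k - i)) ∣ a ^ (k - i) :=
      pow_mul p r (k - i) ▸ pow_dvd_pow_of_dvd ⟨b, hab⟩ _
    refine (pow_dvd_pow p ?_).trans (pow_add p _ _ ▸ mul_dvd_mul hci hai)
    obtain ⟨j, rfl⟩ := Nat.exists_eq_add_of_le hik
    rw [Nat.add_sub_cancel_left]
    nlinarith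
  have hpow : p ^ (k * r + 1) ∣ a ^ k := by
    rw [eq_neg_of_add_eq_zero_left heq, dvd_neg]
    exact Finset.dvd_sum hterm
  rw [hab, mul_pow, ← pow_mul, mul_comm r k, pow_succ,
    mul_dvd_mul_iff_left (pow_ne_zero _ hp.ne_zero)] at hpow
  exact hb (hp.dvd_of_dvd_pow hpow)

theorem PowerSeries.X_pow_dvd_of_isIntegralOverIdeal {S : Type*} [CommRing S] [IsDomain S]
    {f : PowerSeries S} {n : ℕ} (h : IsIntegralOverIdeal (Ideal.span {X ^ n}) f) : X ^ n ∣ f := by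
  rcases eq_or_ne f 0 with rfl | hf
  · exact dvd_zero _
  refine X_prime.pow_dvd_of_isIntegralOverIdeal (emultiplicity_lt_top.mp ?_) h
  rwa [← order_eq_emultiplicity_X, lt_top_iff_ne_top, ne_eq, order_eq_top]

section Decomposition

variable {R : Type*} [CommRing R]

local notation "𝔪" => (Ideal.span {X 0, X 1} : Ideal (MvPowerSeries (Fin 2) R))

theorem MvPowerSeries.exists_sub_C_mem_span_X_pair (f : MvPowerSeries (Fin 2) R) :
    ∃ a : R, f - C a ∈ 𝔪 := by
  set E := finSuccEquiv R 1
  set c := PowerSeries.constantCoeff (E f)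
  obtain ⟨h, hh⟩ : X 0 ∣ c - C (constantCoeff c) := by
    refine X_dvd_iff.mpr fun d hd => ?_
    obtain rfl : d = 0 := Finsupp.ext fun i => by rwa [Subsingleton.elim i 0]
    simp
  obtain ⟨g, hg⟩ : ∃ g, E f = PowerSeries.C c + PowerSeries.X * g :=
    ⟨_, (PowerSeries.eq_X_mul_shift_add_const (E f)).trans (add_comm _ _)⟩
  have hf : f = C (constantCoeff c) + X 0 * E.symm g + X 1 * E.symm (PowerSeries.C h) := by
    apply E.injective
    rw [hg, map_add, map_add, map_mul, map_mul, finSuccEquiv_C, AlgEquiv.apply_symm_apply,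
      AlgEquiv.apply_symm_apply, finSuccEquiv_X_zero, show (1 : Fin 2) = Fin.succ 0 from rfl,
      finSuccEquiv_X_succ, ← map_mul, ← hh, add_right_comm, ← map_add, add_sub_cancel]
  exact ⟨constantCoeff c, Ideal.mem_span_pair.mpr ⟨E.symm g, E.symm (PowerSeries.C h), by
    rw [hf]; ring⟩⟩

theorem MvPowerSeries.exists_sub_linear_mem_sq {f : MvPowerSeries (Fin 2) R} (hf : f ∈ 𝔪) :
    ∃ α β : R, f - (C α * X 0 + C β * X 1) ∈ 𝔪 ^ 2 := by
  obtain ⟨a, b, rfl⟩ := Ideal.mem_span_pair.mp hf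
  obtain ⟨α, hα⟩ := exists_sub_C_mem_span_X_pair a
  obtain ⟨β, hβ⟩ := exists_sub_C_mem_span_X_pair b
  refine ⟨α, β, ?_⟩
  rw [show a * X 0 + b * X 1 - (C α * X 0 + C β * X 1) = (a - C α) * X 0 + (b - C β) * X 1 by
    ring, sq]
  exact add_mem (Ideal.mul_mem_mul hα (Ideal.subset_span (by simp)))
    (Ideal.mul_mem_mul hβ (Ideal.subset_span (by simp)))

theorem MvPowerSeries.exists_sub_quadratic_mem_cube {f : MvPowerSeries (Fin 2) R}
    (hf : f ∈ 𝔪 ^ 2) :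
    ∃ α β γ : R, f - (C α * X 0 ^ 2 + C β * (X 0 * X 1) + C γ * X 1 ^ 2) ∈ 𝔪 ^ 3 := by
  have hsq : 𝔪 ^ 2 = 𝔪 * Ideal.span {X 0} ⊔ 𝔪 * Ideal.span {X 1} := by
    rw [sq, ← Ideal.mul_sup, ← Ideal.span_insert]
  rw [hsq, Submodule.mem_sup] at hf
  obtain ⟨_, hxa, _, hyb, rfl⟩ := hf
  obtain ⟨a, ha, rfl⟩ := Ideal.mem_mul_span_singleton.mp hxa
  obtain ⟨b, hb, rfl⟩ := Ideal.mem_mul_span_singleton.mp hyb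
  obtain ⟨α₁, β₁, hα⟩ := exists_sub_linear_mem_sq ha
  obtain ⟨α₂, β₂, hβ⟩ := exists_sub_linear_mem_sq hb
  refine ⟨α₁, β₁ + α₂, β₂, ?_⟩
  rw [show a * X 0 + b * X 1 - (C α₁ * X 0 ^ 2 + C (β₁ + α₂) * (X 0 * X 1) + C β₂ * X 1 ^ 2) =
      (a - (C α₁ * X 0 + C β₁ * X 1)) * X 0 + (b - (C α₂ * X 0 + C β₂ * X 1)) * X 1 by
    rw [map_add]; ring, pow_succ]
  exact add_mem (Ideal.mul_mem_mul hα (Ideal.subset_span (by simp)))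
    (Ideal.mul_mem_mul hβ (Ideal.subset_span (by simp)))

theorem MvPowerSeries.span_X_pair_pow_three_le :
    𝔪 ^ 3 ≤ Ideal.span {X 0 ^ 3, X 0 ^ 2 * X 1, X 0 ^ 2 + X 1 ^ 2} := by
  set x : MvPowerSeries (Fin 2) R := X 0
  set y : MvPowerSeries (Fin 2) R := X 1
  set I := Ideal.span {x ^ 3, x ^ 2 * y, x ^ 2 + y ^ 2}
  have hx3 : x ^ 3 ∈ I := Ideal.subset_span (by simp)
  have hx2y : x ^ 2 * y ∈ I := Ideal.subset_span (by simp)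
  have hq : x ^ 2 + y ^ 2 ∈ I := Ideal.subset_span (by simp)
  have hxy2 : x * y ^ 2 ∈ I := by
    rw [show x * y ^ 2 = x * (x ^ 2 + y ^ 2) - x ^ 3 by ring]
    exact sub_mem (I.mul_mem_left _ hq) hx3
  have hy3 : y ^ 3 ∈ I := by
    rw [show y ^ 3 = y * (x ^ 2 + y ^ 2) - x ^ 2 * y by ring]
    exact sub_mem (I.mul_mem_left _ hq) hx2y
  rw [Ideal.span, Submodule.span_pow, Submodule.span_le, pow_succ, pow_two]
  rintro _ ⟨_, ⟨a, ha, b, hb, rfl⟩, c, hc, rfl⟩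
  simp only [Set.mem_insert_iff, Set.mem_singleton_iff] at ha hb hc
  rcases ha with rfl | rfl <;> rcases hb with rfl | rfl <;> rcases hc with rfl | rfl
  all_goals
    rw [SetLike.mem_coe]
    ring_nf at hx3 hx2y hxy2 hy3 ⊢
    assumption

end Decomposition

noncomputable def lineSubst (c : ℂ) : MvPowerSeries (Fin 2) ℝ →ₐ[ℝ] PowerSeries ℂ :=
  substAlgHom (a := ![PowerSeries.X, PowerSeries.C c * PowerSeries.X])
    (hasSubst_of_constantCoeff_zero fun s => by
      fin_cases s
      · exact PowerSeries.constantCoeff_X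
      · exact (by simp : PowerSeries.constantCoeff (PowerSeries.C c * PowerSeries.X) = 0))

@[simp] theorem lineSubst_X_zero (c : ℂ) : lineSubst c (X 0) = PowerSeries.X := by
  rw [lineSubst, substAlgHom_X]; rfl

@[simp] theorem lineSubst_X_one (c : ℂ) : lineSubst c (X 1) = PowerSeries.C c * PowerSeries.X := by
  rw [lineSubst, substAlgHom_X]; rfl

@[simp] theorem lineSubst_C (c : ℂ) (a : ℝ) : lineSubst c (C a) = PowerSeries.C (a : ℂ) := by
  rw [c_eq_algebraMap, AlgHom.commutes, PowerSeries.algebraMap_apply]; rfl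

namespace IsotropicIdeal

variable (c : ℂ)

local notation "𝔪" => (Ideal.span {X 0, X 1} : Ideal (MvPowerSeries (Fin 2) ℝ))
local notation "𝔦" =>
  (Ideal.span {X 0 ^ 3, X 0 ^ 2 * X 1, X 0 ^ 2 + X 1 ^ 2} : Ideal (MvPowerSeries (Fin 2) ℝ))

theorem X_pow_dvd_lineSubst_of_mem_pow {f : MvPowerSeries (Fin 2) ℝ} {n : ℕ}
    (hf : f ∈ 𝔪 ^ n) :
    PowerSeries.X ^ n ∣ lineSubst c f := by
  have hm : 𝔪 ≤ (Ideal.span {PowerSeries.X}).comap (lineSubst c) := by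
    rw [Ideal.span_le]
    rintro _ (rfl | rfl) <;> simp [Ideal.mem_span_singleton]
  have := Ideal.le_comap_pow _ n (Ideal.pow_right_mono hm n hf)
  rwa [Ideal.mem_comap, Ideal.span_singleton_pow, Ideal.mem_span_singleton] at this

theorem span_le_comap_lineSubst_I :
    𝔦 ≤ (Ideal.span {PowerSeries.X ^ 3}).comap (lineSubst Complex.I) := by
  rw [Ideal.span_le]
  rintro _ (rfl | rfl | rfl) <;>
    simp only [SetLike.mem_coe, Ideal.mem_comap, Ideal.mem_span_singleton, map_add, map_mul,
      map_pow, lineSubst_X_zero, lineSubst_X_one]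
  · exact dvd_rfl
  · exact ⟨PowerSeries.C Complex.I, by ring⟩
  · rw [mul_pow, ← map_pow, Complex.I_sq, map_neg, map_one, neg_one_mul, add_neg_cancel]
    exact dvd_zero _

theorem X_pow_three_dvd_lineSubst_I_of_mem {f : MvPowerSeries (Fin 2) ℝ} (hf : f ∈ 𝔦) :
    PowerSeries.X ^ 3 ∣ lineSubst Complex.I f :=
  Ideal.mem_span_singleton.mp (span_le_comap_lineSubst_I hf)

theorem X_pow_dvd_lineSubst_of_sub_mem_pow {f g : MvPowerSeries (Fin 2) ℝ} {n : ℕ}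
    (hf : PowerSeries.X ^ n ∣ lineSubst c f) (hfg : f - g ∈ 𝔪 ^ n) :
    PowerSeries.X ^ n ∣ lineSubst c g := by
  have := dvd_sub hf (X_pow_dvd_lineSubst_of_mem_pow c hfg)
  rwa [map_sub, sub_sub_cancel] at this

theorem mem_span_X_pair_of_X_dvd_lineSubst {f : MvPowerSeries (Fin 2) ℝ}
    (hf : PowerSeries.X ∣ lineSubst c f) : f ∈ 𝔪 := by
  obtain ⟨a, ha⟩ := exists_sub_C_mem_span_X_pair f
  have hC := X_pow_dvd_lineSubst_of_sub_mem_pow c (n := 1) (by rwa [pow_one]) (by rwa [pow_one])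
  rw [lineSubst_C, ← mul_one (PowerSeries.C _), ← pow_zero PowerSeries.X,
    PowerSeries.X_pow_succ_dvd_C_mul_X_pow_iff, Complex.ofReal_eq_zero] at hC
  simpa [hC] using ha

theorem mem_sq_of_X_sq_dvd_lineSubst {f : MvPowerSeries (Fin 2) ℝ}
    (hf : PowerSeries.X ^ 2 ∣ lineSubst Complex.I f) : f ∈ 𝔪 ^ 2 := by
  obtain ⟨α, β, hαβ⟩ := exists_sub_linear_mem_sq
    (mem_span_X_pair_of_X_dvd_lineSubst _ ((dvd_pow_self _ two_ne_zero).trans hf))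
  have hL := X_pow_dvd_lineSubst_of_sub_mem_pow _ hf hαβ
  rw [show lineSubst Complex.I (C α * X 0 + C β * X 1) =
      PowerSeries.C (α + β * Complex.I) * PowerSeries.X ^ 1 by
    simp; ring, PowerSeries.X_pow_succ_dvd_C_mul_X_pow_iff] at hL
  obtain ⟨rfl, rfl⟩ : α = 0 ∧ β = 0 := by simpa using Complex.ext_iff.mp hL
  simpa using hαβ

theorem mem_of_X_pow_three_dvd_lineSubst {f : MvPowerSeries (Fin 2) ℝ}
    (hf : PowerSeries.X ^ 3 ∣ lineSubst Complex.I f) : f ∈ 𝔦 := by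
  obtain ⟨α, β, γ, hQ⟩ := exists_sub_quadratic_mem_cube
    (mem_sq_of_X_sq_dvd_lineSubst ((pow_dvd_pow _ (by norm_num)).trans hf))
  have hL := X_pow_dvd_lineSubst_of_sub_mem_pow _ hf hQ
  rw [show lineSubst Complex.I (C α * X 0 ^ 2 + C β * (X 0 * X 1) + C γ * X 1 ^ 2) =
      PowerSeries.C (α - γ + β * Complex.I) * PowerSeries.X ^ 2 by
    have hI : PowerSeries.C Complex.I ^ 2 = -1 := by
      rw [← map_pow, Complex.I_sq, map_neg, map_one]
    simp only [map_add, map_sub, map_mul, map_pow, lineSubst_C, lineSubst_X_zero, lineSubst_X_one]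
    linear_combination (PowerSeries.C (γ : ℂ) * PowerSeries.X ^ 2) * hI,
    PowerSeries.X_pow_succ_dvd_C_mul_X_pow_iff] at hL
  obtain ⟨hαγ, rfl⟩ : α - γ = 0 ∧ β = 0 := by simpa using Complex.ext_iff.mp hL
  rw [sub_eq_zero] at hαγ
  subst hαγ
  rw [← sub_add_cancel f (C α * X 0 ^ 2 + C 0 * (X 0 * X 1) + C α * X 1 ^ 2)]
  refine add_mem (span_X_pair_pow_three_le hQ) ?_
  rw [map_zero, zero_mul, add_zero, ← mul_add]
  exact Ideal.mul_mem_left _ _ (Ideal.subset_span (by simp))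

theorem mem_sq_of_mul_mem {u z : MvPowerSeries (Fin 2) ℝ} (hz : z ∈ 𝔪) (hz2 : z ∉ 𝔪 ^ 2)
    (huz : u * z ∈ 𝔦) : u ∈ 𝔪 ^ 2 :=
  mem_sq_of_X_sq_dvd_lineSubst <| Prime.pow_dvd_of_pow_succ_dvd_mul PowerSeries.X_prime
    (map_mul (lineSubst _) u z ▸ X_pow_three_dvd_lineSubst_I_of_mem huz)
    (by simpa using X_pow_dvd_lineSubst_of_mem_pow Complex.I (n := 1) (by simpa using hz))
    (fun h => hz2 (mem_sq_of_X_sq_dvd_lineSubst h))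

theorem colon_span_singleton_eq {z : MvPowerSeries (Fin 2) ℝ} (hz : z ∈ 𝔪)
    (hz2 : z ∉ 𝔪 ^ 2) :
    Submodule.colon 𝔦 (Ideal.span {z}) = 𝔪 ^ 2 := by
  ext u
  rw [Ideal.colon_span, Submodule.mem_colon_singleton, smul_eq_mul]
  exact ⟨mem_sq_of_mul_mem hz hz2,
    fun hu => span_X_pair_pow_three_le (pow_succ 𝔪 2 ▸ Ideal.mul_mem_mul hu hz)⟩

theorem X_zero_notMem_sq : X 0 ∉ 𝔪 ^ 2 := fun h =>
  PowerSeries.not_X_pow_succ_dvd_X_pow (S := ℂ) 1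
    (by simpa using X_pow_dvd_lineSubst_of_mem_pow 0 h)

theorem colon_span_X_pair_eq : Submodule.colon 𝔦 𝔪 = 𝔪 ^ 2 := by
  refine le_antisymm ?_ fun u hu => Submodule.mem_colon.mpr fun p hp => ?_
  · rw [← colon_span_singleton_eq (Ideal.subset_span (by simp)) X_zero_notMem_sq]
    exact Submodule.colon_mono le_rfl (Ideal.span_mono (by simp))
  · exact span_X_pair_pow_three_le (pow_succ 𝔪 2 ▸ Ideal.mul_mem_mul hu hp)

theorem ne_span_X_pair_pow (n : ℕ) : 𝔦 ≠ 𝔪 ^ n := by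
  intro h
  rcases le_or_gt n 2 with hn | hn
  · have hx : X 0 ^ 2 ∈ 𝔦 :=
      h ▸ Ideal.pow_le_pow_right hn (Ideal.pow_mem_pow (Ideal.subset_span (by simp)) 2)
    have := X_pow_three_dvd_lineSubst_I_of_mem hx
    rw [map_pow, lineSubst_X_zero] at this
    exact PowerSeries.not_X_pow_succ_dvd_X_pow (S := ℂ) 2 this
  · have hq : X 0 ^ 2 + X 1 ^ 2 ∈ 𝔪 ^ 3 :=
      Ideal.pow_le_pow_right hn (h ▸ Ideal.subset_span (by simp))
    have := X_pow_dvd_lineSubst_of_mem_pow 0 hq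
    simp only [map_add, map_pow, lineSubst_X_zero, lineSubst_X_one, map_zero, zero_mul] at this
    exact PowerSeries.not_X_pow_succ_dvd_X_pow (S := ℂ) 2 (by simpa using this)

theorem mem_of_isIntegralOverIdeal {a : MvPowerSeries (Fin 2) ℝ}
    (h : IsIntegralOverIdeal 𝔦 a) : a ∈ 𝔦 :=
  mem_of_X_pow_three_dvd_lineSubst <| PowerSeries.X_pow_dvd_of_isIntegralOverIdeal <|
    (h.map (lineSubst Complex.I)).mono (Ideal.map_le_iff_le_comap.mpr span_le_comap_lineSubst_I)

end IsotropicIdeal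

/-- Remark 3.5. In `R = ℝ[[x,y]]` with maximal ideal
`m = (x,y)`, the ideal `I = (x³, x²y, x² + y²)` satisfies
`(I : z) = (I : m) = m²` for every `z ∈ m \ m²`, is integrally closed, and is
not a power of `m`.  (In particular, an integrally closed `m`-primary ideal of
a two-dimensional regular local ring can be contracted from `R[m/z]` for every
`z ∈ m \ m²` without being a power of `m`.) -/
theorem stmt_5 :
    letI R := MvPowerSeries (Fin 2) ℝ
    letI x : R := MvPowerSeries.X 0
    letI y : R := MvPowerSeries.X 1
    letI m : Ideal R := Ideal.span {x, y}
    letI I : Ideal R := Ideal.span {x ^ 3, x ^ 2 * y, x ^ 2 + y ^ 2}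
    Submodule.colon I m = m ^ 2 ∧
    (∀ z : R, z ∈ m → z ∉ m ^ 2 →
      Submodule.colon I (Ideal.span {z}) = Submodule.colon I m) ∧
    (∀ a : R, IsIntegralOverIdeal I a → a ∈ I) ∧
    (∀ n : ℕ, I ≠ m ^ n) :=
  ⟨IsotropicIdeal.colon_span_X_pair_eq,
    fun _ hz hz2 => (IsotropicIdeal.colon_span_singleton_eq hz hz2).trans
      IsotropicIdeal.colon_span_X_pair_eq.symm,
    fun _ => IsotropicIdeal.mem_of_isIntegralOverIdeal, IsotropicIdeal.ne_span_X_pair_pow⟩
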